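/- arXiv:2108.08567 — 2 statements merged into one kernel-verified Lean document; each statement's English description precedes it below -/
import Mathlib

section
/- Let α be a badly approximable real number and s > 1. Then the Dirichlet series ∑_{n=1}^{∞} 1/(⟨nα⟩ · n^s) converges, where ⟨x⟩ denotes the distance from x to the nearest integer. -/
/-!
If `c ≤ q ⟨qα⟩` for all `q ≥ 1`, then for distinct `m, n ≤ N` the distance between `⟨mα⟩` and
`⟨nα⟩` dominates `⟨(m - n)α⟩` or `⟨(m + n)α⟩`, so these points are `c / 2N`-separated; they also
lie in `[c / N, 1 / 2]`. Hence `∑_{m ≤ N} 1 / ⟨mα⟩ ≤ (2N / c) H_{⌊N / c⌋} = O(N^{1 + ε})`, and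
comparing the series with `m^{-s}` on dyadic blocks `[2^k, 2^{k+1})` gives a convergent
geometric series as soon as `1 + ε < s`.
-/

open Real

/-- Distance from `x` to the nearest integer. -/
noncomputable def distNearestInt (x : ℝ) : ℝ := |x - round x|

open Finset

theorem sum_inv_le_inv_mul_harmonic_of_separated {ι : Type*} (S : Finset ι) (x : ι → ℝ)
    {δ B : ℝ} (hδ : 0 < δ) (hlow : ∀ i ∈ S, δ ≤ x i) (hup : ∀ i ∈ S, x i ≤ B)
    (hsep : ∀ i ∈ S, ∀ j ∈ S, i ≠ j → δ ≤ |x i - x j|) :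
    ∑ i ∈ S, (x i)⁻¹ ≤ δ⁻¹ * harmonic ⌊B / δ⌋₊ := by
  classical
  -- separation makes the bucket index `⌊x i / δ⌋` injective, and `x i ≥ δ ⌊x i / δ⌋`
  set g : ι → ℕ := fun i => ⌊x i / δ⌋₊
  have hg_le : ∀ i ∈ S, (g i : ℝ) * δ ≤ x i := fun i hi =>
    (le_div_iff₀ hδ).1 (Nat.floor_le (div_nonneg (hδ.le.trans (hlow i hi)) hδ.le))
  have hlt_g : ∀ i, x i < (g i + 1) * δ := fun i => (div_lt_iff₀ hδ).1 (Nat.lt_floor_add_one _)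
  have hg_mem : ∀ i ∈ S, g i ∈ Icc 1 ⌊B / δ⌋₊ := fun i hi => mem_Icc.2
    ⟨Nat.le_floor (by simpa using (one_le_div hδ).2 (hlow i hi)),
      Nat.floor_le_floor (div_le_div_of_nonneg_right (hup i hi) hδ.le)⟩
  have hg_inj : Set.InjOn g S := by
    intro i hi j hj hij
    by_contra hne
    have hclose : |x i - x j| < δ := by
      have hi₁ := hg_le i hi; have hi₂ := hlt_g i
      rw [hij] at hi₁ hi₂
      rw [abs_sub_lt_iff]; constructor <;> linarith [hg_le j hj, hlt_g j]
    linarith [hsep i hi j hj hne]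
  calc ∑ i ∈ S, (x i)⁻¹ ≤ ∑ i ∈ S, δ⁻¹ * (g i : ℝ)⁻¹ := by
        refine sum_le_sum fun i hi => ?_
        have : (1 : ℝ) ≤ g i := by exact_mod_cast (mem_Icc.1 (hg_mem i hi)).1
        rw [← mul_inv]
        exact inv_anti₀ (by positivity) (by linarith [hg_le i hi])
    _ = δ⁻¹ * ∑ j ∈ S.image g, (j : ℝ)⁻¹ := by rw [mul_sum, sum_image hg_inj]
    _ ≤ δ⁻¹ * ∑ j ∈ Icc 1 ⌊B / δ⌋₊, (j : ℝ)⁻¹ := by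
        gcongr
        exact image_subset_iff.2 hg_mem
    _ = δ⁻¹ * harmonic ⌊B / δ⌋₊ := by rw [harmonic_eq_sum_Icc]; push_cast; rfl

theorem distNearestInt_nonneg (x : ℝ) : 0 ≤ distNearestInt x := abs_nonneg _

theorem min_distNearestInt_sub_add_le (x y : ℝ) :
    min (distNearestInt (x - y)) (distNearestInt (x + y)) ≤
      |distNearestInt x - distNearestInt y| := by
  set a := x - round x
  set b := y - round y
  have hsub : distNearestInt (x - y) ≤ |a - b| := by
    simpa [distNearestInt, a, b, sub_sub_sub_comm] using round_le (x - y) (round x - round y)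
  have hadd : distNearestInt (x + y) ≤ |a + b| := by
    simpa [distNearestInt, a, b, add_sub_add_comm] using round_le (x + y) (round x + round y)
  have habs : |(|a| - |b|)| = |a - b| ∨ |(|a| - |b|)| = |a + b| := by
    rcases abs_choice a with ha | ha <;> rcases abs_choice b with hb | hb <;> rw [ha, hb]
    · exact .inl rfl
    · exact .inr (by rw [sub_neg_eq_add])
    · exact .inr (by rw [← abs_neg]; ring_nf)
    · exact .inl (by rw [← abs_neg]; ring_nf)
  rcases habs with h | h
  · exact (min_le_left _ _).trans (h ▸ hsub)
  · exact (min_le_right _ _).trans (h ▸ hadd)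

theorem summable_div_rpow_of_sum_range_le_rpow {a : ℕ → ℝ} (ha : ∀ n, 0 ≤ a n) {K t s : ℝ}
    (hs : 0 ≤ s) (hts : t < s) (hA : ∀ N : ℕ, ∑ n ∈ range N, a n ≤ K * (N : ℝ) ^ t) :
    Summable fun n : ℕ => a n / ((n : ℝ) + 1) ^ s := by
  set b : ℕ → ℝ := fun n => a n / ((n : ℝ) + 1) ^ s
  have hb : ∀ n, 0 ≤ b n := fun n => div_nonneg (ha n) (by positivity)
  set r : ℝ := (2 : ℝ) ^ t / (2 : ℝ) ^ s
  have hr₀ : 0 ≤ r := by positivity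
  have hr₁ : r < 1 := (div_lt_one (by positivity)).2 (rpow_lt_rpow_of_exponent_lt one_lt_two hts)
  have hK : 0 ≤ K := (ha 0).trans (by simpa using hA 1)
  -- dyadic block `2 ^ k ≤ n + 1 < 2 ^ (k + 1)`
  have block : ∀ k : ℕ, ∑ n ∈ Ico (2 ^ k - 1) (2 ^ (k + 1) - 1), b n ≤ K * 2 ^ t * r ^ k := by
    intro k
    have hpow : (0 : ℝ) < ((2 : ℝ) ^ k) ^ s := by positivity
    calc ∑ n ∈ Ico (2 ^ k - 1) (2 ^ (k + 1) - 1), b n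
        ≤ ∑ n ∈ Ico (2 ^ k - 1) (2 ^ (k + 1) - 1), a n / ((2 : ℝ) ^ k) ^ s := by
          refine sum_le_sum fun n hn => div_le_div_of_nonneg_left (ha n) hpow ?_
          have : 2 ^ k ≤ n + 1 := by have := (mem_Ico.1 hn).1; have := k.one_le_two_pow; omega
          exact rpow_le_rpow (by positivity) (by exact_mod_cast this) hs
      _ ≤ (∑ n ∈ range (2 ^ (k + 1)), a n) / ((2 : ℝ) ^ k) ^ s := by
          rw [← sum_div]
          gcongr
          · exact fun n _ _ => ha n
          · intro n hn; simp only [mem_Ico, mem_range] at hn ⊢; omega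
      _ ≤ K * ((2 : ℝ) ^ (k + 1)) ^ t / ((2 : ℝ) ^ k) ^ s := by
          gcongr; exact_mod_cast hA (2 ^ (k + 1))
      _ = K * 2 ^ t * r ^ k := by
          rw [div_pow, ← rpow_pow_comm (by norm_num), ← rpow_pow_comm (by norm_num), pow_succ']
          ring
  have dyadic : ∀ k : ℕ, ∑ n ∈ range (2 ^ k - 1), b n ≤ ∑ i ∈ range k, K * 2 ^ t * r ^ i := by
    intro k
    induction k with
    | zero => simp
    | succ k ih =>
      rw [← sum_range_add_sum_Ico b (m := 2 ^ k - 1)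
        (Nat.sub_le_sub_right (Nat.pow_le_pow_right two_pos k.le_succ) 1), sum_range_succ]
      exact add_le_add ih (block k)
  have hgeom : Summable fun i : ℕ => K * 2 ^ t * r ^ i :=
    (summable_geometric_of_lt_one hr₀ hr₁).mul_left _
  refine summable_of_sum_range_le (c := ∑' i, K * 2 ^ t * r ^ i) hb fun N => ?_
  calc ∑ n ∈ range N, b n ≤ ∑ n ∈ range (2 ^ N - 1), b n :=
        sum_le_sum_of_subset_of_nonneg (range_subset_range.2 (by have := N.lt_two_pow_self; omega))
          fun n _ _ => hb n
    _ ≤ ∑ i ∈ range N, K * 2 ^ t * r ^ i := dyadic N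
    _ ≤ ∑' i, K * 2 ^ t * r ^ i := hgeom.sum_le_tsum _ fun i _ => by positivity

def IsBadlyApproximableWith (c α : ℝ) : Prop :=
  ∀ q : ℕ, 0 < q → c ≤ q * distNearestInt (q * α)

section BadlyApproximable

variable {α c : ℝ}

theorem div_le_distNearestInt (hα : IsBadlyApproximableWith c α)
    {q : ℕ} (hq : 0 < q) : c / q ≤ distNearestInt (q * α) :=
  (div_le_iff₀' (by exact_mod_cast hq)).2 (hα q hq)

theorem div_add_le_abs_distNearestInt_sub
    (hα : IsBadlyApproximableWith c α) (hc : 0 ≤ c)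
    {m n : ℕ} (hm : 0 < m) (hn : 0 < n) (hmn : m ≠ n) :
    c / (m + n) ≤ |distNearestInt (m * α) - distNearestInt (n * α)| := by
  wlog hnm : n < m generalizing m n
  · rw [abs_sub_comm, add_comm]
    exact this hn hm hmn.symm (by omega)
  have hsub : c / (m + n) ≤ distNearestInt ((m - n : ℝ) * α) := by
    have h := div_le_distNearestInt hα (Nat.sub_pos_of_lt hnm)
    rw [Nat.cast_sub hnm.le] at h
    have hnm' : (n : ℝ) < m := by exact_mod_cast hnm
    have hn' : (0 : ℝ) < n := by exact_mod_cast hn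
    exact (div_le_div_of_nonneg_left hc (by linarith) (by linarith)).trans h
  have hadd : c / (m + n) ≤ distNearestInt ((m + n : ℝ) * α) := by
    exact_mod_cast div_le_distNearestInt hα (Nat.add_pos_left hm n)
  calc c / (m + n)
      ≤ min (distNearestInt (m * α - n * α)) (distNearestInt (m * α + n * α)) := by
        rw [← sub_mul, ← add_mul]
        exact le_min hsub hadd
    _ ≤ _ := min_distNearestInt_sub_add_le _ _

theorem sum_range_inv_distNearestInt_le
    (hα : IsBadlyApproximableWith c α) (hc : 0 < c) (N : ℕ) :
    ∑ n ∈ range N, (distNearestInt ((n + 1 : ℝ) * α))⁻¹ ≤ 2 * N / c * harmonic ⌊N / c⌋₊ := by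
  rcases N.eq_zero_or_pos with rfl | hN
  · simp
  have hN' : (0 : ℝ) < N := by exact_mod_cast hN
  have hlow : ∀ n ∈ range N, c / (2 * N) ≤ distNearestInt ((n + 1 : ℝ) * α) := by
    intro n hn
    have h := div_le_distNearestInt hα n.succ_pos
    push_cast at h
    refine le_trans (div_le_div_of_nonneg_left hc.le (by positivity) ?_) h
    have : (n : ℝ) + 1 ≤ N := by exact_mod_cast mem_range.1 hn
    linarith
  have hsep : ∀ i ∈ range N, ∀ j ∈ range N, i ≠ j →
      c / (2 * N) ≤ |distNearestInt ((i + 1 : ℝ) * α) - distNearestInt ((j + 1 : ℝ) * α)| := by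
    intro i hi j hj hij
    have h := div_add_le_abs_distNearestInt_sub hα hc.le i.succ_pos j.succ_pos
      (by omega : i + 1 ≠ j + 1)
    push_cast at h
    refine le_trans (div_le_div_of_nonneg_left hc.le (by positivity) ?_) h
    have : (i : ℝ) + 1 ≤ N := by exact_mod_cast mem_range.1 hi
    have : (j : ℝ) + 1 ≤ N := by exact_mod_cast mem_range.1 hj
    linarith
  calc ∑ n ∈ range N, (distNearestInt ((n + 1 : ℝ) * α))⁻¹
      ≤ (c / (2 * N))⁻¹ * harmonic ⌊(1 / 2) / (c / (2 * N))⌋₊ :=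
        sum_inv_le_inv_mul_harmonic_of_separated _ _ (by positivity) hlow
          (fun n _ => abs_sub_round _) hsep
    _ = 2 * N / c * harmonic ⌊N / c⌋₊ := by
        rw [inv_div]; congr 4; field_simp

theorem exists_sum_range_inv_distNearestInt_le_rpow
    (hα : IsBadlyApproximableWith c α) (hc : 0 < c) {ε : ℝ} (hε : 0 < ε) :
    ∃ K, ∀ N : ℕ, ∑ n ∈ range N, (distNearestInt ((n + 1 : ℝ) * α))⁻¹ ≤ K * (N : ℝ) ^ (1 + ε) := by
  refine ⟨2 / c * (1 + 1 / (c ^ ε * ε)), fun N => ?_⟩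
  rcases N.eq_zero_or_pos with rfl | hN
  · simp [zero_rpow (by positivity : 1 + ε ≠ 0)]
  have hN' : (1 : ℝ) ≤ N := by exact_mod_cast hN
  have hharm : (harmonic ⌊N / c⌋₊ : ℝ) ≤ 1 + (N / c) ^ ε / ε := by
    calc (harmonic ⌊N / c⌋₊ : ℝ) ≤ 1 + log ⌊N / c⌋₊ := harmonic_le_one_add_log _
      _ ≤ 1 + (⌊N / c⌋₊ : ℝ) ^ ε / ε := by gcongr; exact log_le_rpow_div (by positivity) hε
      _ ≤ 1 + (N / c) ^ ε / ε := by gcongr; exact Nat.floor_le (by positivity)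
  calc ∑ n ∈ range N, (distNearestInt ((n + 1 : ℝ) * α))⁻¹
      ≤ 2 * N / c * (1 + (N / c) ^ ε / ε) :=
        (sum_range_inv_distNearestInt_le hα hc N).trans (by gcongr)
    _ ≤ 2 * N / c * ((N : ℝ) ^ ε + (N : ℝ) ^ ε / (c ^ ε * ε)) := by
        rw [div_rpow (by positivity) hc.le, div_div]
        gcongr
        exact one_le_rpow hN' hε.le
    _ = 2 / c * (1 + 1 / (c ^ ε * ε)) * (N : ℝ) ^ (1 + ε) := by
        rw [rpow_one_add' (by positivity) (by positivity)]
        ring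

end BadlyApproximable

/-- For badly approximable `α` and `s > 1`, the series
`∑_{n≥1} 1/(⟨nα⟩ nˢ)` converges. -/
theorem dirichlet_series_badly_approximable_summable (α : ℝ)
    (hα : ∃ c > 0, ∀ q : ℕ, 0 < q → c ≤ (q : ℝ) * distNearestInt (q * α))
    (s : ℝ) (hs : 1 < s) :
    Summable (fun n : ℕ =>
      1 / (distNearestInt ((n + 1 : ℝ) * α) * ((n + 1 : ℝ)) ^ s)) := by
  obtain ⟨c, hc, hαc⟩ := hα
  obtain ⟨K, hK⟩ := exists_sum_range_inv_distNearestInt_le_rpow hαc hc (ε := (s - 1) / 2)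
    (by linarith)
  have hsum := summable_div_rpow_of_sum_range_le_rpow (hA := hK) (s := s)
    (fun n => inv_nonneg.2 (distNearestInt_nonneg _)) (by linarith) (by linarith)
  exact hsum.congr fun n => by rw [one_div, mul_inv, div_eq_mul_inv]
end

section
/- For all integers M ≥ 0, N > M, and all real s > 1 and reals k ≠ 0, after the van der Corput differencing step one has the bound |∑_{n=M+1}^{N} e^{2πi θ n²}|² ≤ (N−M) + 2∑_{p=1}^{N−M−1} 1/|sin(2πθp)|, for any real θ with θp ∉ (1/2)ℤ for 1 ≤ p ≤ N−M−1. -/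
/-!
Expanding the square by lags, `‖∑ z k‖² = ∑ ‖z k‖² + 2 Re ∑_{d ≥ 1} ∑_k z k * conj (z (k + d))`.
For the quadratic phase `z k = e(θ (a + k)²)` the lag-`d` sum is, up to a unimodular factor,
the geometric sum `∑ w ^ k` with `w = e(-2θd)`, whose norm is at most
`2 / ‖w - 1‖ = 1 / |sin (2πθd)|`.
-/

open scoped Real

open Complex Finset ComplexConjugate

noncomputable def lagSum (z : ℕ → ℂ) (L d : ℕ) : ℂ :=
  ∑ k ∈ range (L - d), z k * conj (z (k + d))

lemma lagSum_self (z : ℕ → ℂ) (L : ℕ) : lagSum z L L = 0 := by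
  simp [lagSum]

lemma lagSum_succ (z : ℕ → ℂ) {L d : ℕ} (hd : d ≤ L) :
    lagSum z (L + 1) d = lagSum z L d + z (L - d) * conj (z L) := by
  rw [lagSum, lagSum, Nat.sub_add_comm hd, sum_range_succ, Nat.sub_add_cancel hd]

lemma sum_lagSum_succ (z : ℕ → ℂ) (L : ℕ) :
    ∑ d ∈ Ico 1 (L + 1), lagSum z (L + 1) d =
      ∑ d ∈ Ico 1 L, lagSum z L d + (∑ k ∈ range L, z k) * conj (z L) := by
  have hold : ∑ d ∈ Ico 1 (L + 1), lagSum z L d = ∑ d ∈ Ico 1 L, lagSum z L d := by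
    rcases L.eq_zero_or_pos with rfl | hL
    · simp
    · rw [sum_Ico_succ_top hL, lagSum_self, add_zero]
  have hnew : ∑ d ∈ Ico 1 (L + 1), z (L - d) * conj (z L) = (∑ k ∈ range L, z k) * conj (z L) := by
    rw [sum_mul, ← sum_range_reflect, sum_Ico_eq_sum_range]
    refine sum_congr (by simp) fun k hk => ?_
    rw [mem_range] at hk
    congr 2
    omega
  calc ∑ d ∈ Ico 1 (L + 1), lagSum z (L + 1) d
      = ∑ d ∈ Ico 1 (L + 1), (lagSum z L d + z (L - d) * conj (z L)) :=
        sum_congr rfl fun d hd => lagSum_succ z (by rw [mem_Ico] at hd; omega)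
    _ = _ := by rw [sum_add_distrib, hold, hnew]

theorem normSq_sum_range_eq (z : ℕ → ℂ) (L : ℕ) :
    normSq (∑ k ∈ range L, z k) =
      ∑ k ∈ range L, normSq (z k) + 2 * (∑ d ∈ Ico 1 L, lagSum z L d).re := by
  induction L with
  | zero => simp
  | succ L ih =>
    rw [sum_range_succ, normSq_add, ih, sum_lagSum_succ, sum_range_succ, add_re]
    ring

theorem norm_sum_range_sq_le (z : ℕ → ℂ) (L : ℕ) :
    ‖∑ k ∈ range L, z k‖ ^ 2 ≤
      ∑ k ∈ range L, ‖z k‖ ^ 2 + 2 * ∑ d ∈ Ico 1 L, ‖lagSum z L d‖ := by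
  simp only [Complex.sq_norm]
  rw [normSq_sum_range_eq, re_sum]
  gcongr with d
  exact re_le_norm _

lemma norm_geom_sum_le {w : ℂ} (hw : ‖w‖ = 1) (hw1 : w ≠ 1) (n : ℕ) :
    ‖∑ k ∈ range n, w ^ k‖ ≤ 2 / ‖w - 1‖ := by
  rw [geom_sum_eq hw1, norm_div]
  gcongr
  calc ‖w ^ n - 1‖ ≤ ‖w ^ n‖ + ‖(1 : ℂ)‖ := norm_sub_le _ _
    _ = 2 := by rw [norm_pow, hw]; norm_num

lemma norm_exp_two_pi_I_mul (x : ℝ) : ‖exp (2 * π * I * x)‖ = 1 := by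
  rw [norm_exp]; simp

lemma norm_exp_two_pi_I_mul_sub_one (x : ℝ) :
    ‖exp (2 * π * I * x) - 1‖ = 2 * |Real.sin (π * x)| := by
  rw [show 2 * π * I * x = I * ↑(2 * π * x) by push_cast; ring, norm_exp_I_mul_ofReal_sub_one,
    norm_mul, Real.norm_ofNat, Real.norm_eq_abs, mul_div_right_comm, mul_div_cancel_left₀ _ two_ne_zero]

lemma exp_quadratic_mul_conj (θ a : ℝ) (k d : ℕ) :
    exp (2 * π * I * ((θ * (a + k) ^ 2 : ℝ) : ℂ)) *
        conj (exp (2 * π * I * ((θ * (a + (k + d : ℕ)) ^ 2 : ℝ) : ℂ))) =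
      exp (2 * π * I * ((-(θ * (2 * a * d + d ^ 2)) : ℝ) : ℂ)) *
        exp (2 * π * I * ((-(2 * θ * d)) : ℝ)) ^ k := by
  rw [← exp_conj, ← exp_nat_mul, ← exp_add, ← exp_add]
  congr 1
  simp only [map_mul, conj_I, conj_ofReal, map_ofNat]
  push_cast
  ring

lemma sin_two_pi_mul_ne_zero {x : ℝ} (hx : ∀ m : ℤ, x ≠ m / 2) : Real.sin (2 * π * x) ≠ 0 := by
  rw [Ne, Real.sin_eq_zero_iff]
  rintro ⟨m, hm⟩
  apply hx m
  rw [eq_div_iff two_ne_zero]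
  apply mul_left_cancel₀ Real.pi_ne_zero
  linarith

lemma norm_lagSum_quadratic_le (θ a : ℝ) (L d : ℕ) (hsin : Real.sin (2 * π * θ * d) ≠ 0) :
    ‖lagSum (fun k => exp (2 * π * I * ((θ * (a + k) ^ 2 : ℝ) : ℂ))) L d‖ ≤
      1 / |Real.sin (2 * π * θ * d)| := by
  let w := exp (2 * π * I * ((-(2 * θ * d)) : ℝ))
  have hw_norm : ‖w‖ = 1 := norm_exp_two_pi_I_mul _
  have hw_sub : ‖w - 1‖ = 2 * |Real.sin (2 * π * θ * d)| := by
    rw [norm_exp_two_pi_I_mul_sub_one, ← abs_neg, ← Real.sin_neg]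
    ring_nf
  have hw1 : w ≠ 1 := by
    rintro h
    rw [h, sub_self, norm_zero] at hw_sub
    exact hsin (abs_eq_zero.mp (by linarith))
  calc ‖lagSum _ L d‖ = ‖∑ k ∈ range (L - d), w ^ k‖ := by
        simp only [lagSum, exp_quadratic_mul_conj, ← mul_sum, norm_mul, norm_exp_two_pi_I_mul,
          one_mul]
        rfl
    _ ≤ 2 / ‖w - 1‖ := norm_geom_sum_le hw_norm hw1 _
    _ = 1 / |Real.sin (2 * π * θ * d)| := by
        rw [hw_sub]
        field_simp

/-- The key intermediate inequality in the van der Corput differencing for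
quadratic phases: if `θp ∉ (1/2)ℤ` for `1 ≤ p ≤ N−M−1`, then
`|∑_{n=M+1}^N e^{2πiθn²}|² ≤ (N−M) + 2∑_{p=1}^{N−M−1} 1/|sin(2πθp)|`. -/
theorem vanDerCorput_differencing_quadratic (M N : ℕ) (hMN : M < N) (θ : ℝ)
    (hθ : ∀ p : ℕ, 1 ≤ p → p ≤ N - M - 1 → ∀ m : ℤ, θ * (p : ℝ) ≠ (m : ℝ) / 2) :
    ‖∑ n ∈ Finset.Icc (M + 1) N,
        Complex.exp (2 * Real.pi * Complex.I * ((θ * (n : ℝ) ^ 2 : ℝ) : ℂ))‖ ^ 2 ≤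
      ((N : ℝ) - (M : ℝ)) +
        2 * ∑ p ∈ Finset.Icc 1 (N - M - 1), 1 / |Real.sin (2 * Real.pi * θ * (p : ℝ))| := by
  let z : ℕ → ℂ := fun k => exp (2 * π * I * ((θ * ((M + 1 : ℕ) + k) ^ 2 : ℝ) : ℂ))
  have hshift : ∑ n ∈ Icc (M + 1) N, exp (2 * π * I * ((θ * (n : ℝ) ^ 2 : ℝ) : ℂ)) =
      ∑ k ∈ range (N - M), z k := by
    rw [← Ico_add_one_right_eq_Icc, sum_Ico_eq_sum_range, Nat.add_sub_add_right]
    simp [z, add_comm]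
  have hdiag : ∑ k ∈ range (N - M), ‖z k‖ ^ 2 = (N - M : ℕ) := by
    simp only [z, norm_exp_two_pi_I_mul, one_pow, sum_const, card_range, nsmul_eq_mul, mul_one]
  have hlag : ∀ d ∈ Ico 1 (N - M), ‖lagSum z (N - M) d‖ ≤ 1 / |Real.sin (2 * π * θ * d)| := by
    intro d hd
    rw [mem_Ico] at hd
    have hsin := sin_two_pi_mul_ne_zero (hθ d hd.1 (by omega))
    rw [← mul_assoc] at hsin
    exact norm_lagSum_quadratic_le θ _ _ _ hsin
  have hlags : Icc 1 (N - M - 1) = Ico 1 (N - M) := by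
    ext; simp only [mem_Icc, mem_Ico]; omega
  rw [hshift, hlags, ← Nat.cast_sub hMN.le, ← hdiag]
  grw [norm_sum_range_sq_le z (N - M), sum_le_sum hlag]
end
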